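/- Let G be a simple graph with vertex degrees d_1 ≥ d_2 ≥ … ≥ d_n, adjacency matrix A, and let A' be obtained from A by a symmetric positive switch at distinct coordinates (i,j,k,l) (i<j, k<l, all of i,j,k,l distinct): edges {i,l} and {j,k} are removed and edges {i,k} and {j,l} are added. Then the second Zagreb index M_2 = Σ_{edges uv} d_u d_v satisfies M_2(A') − M_2(A) = (d_i − d_j)(d_k − d_l) ≥ 0. -/

import Mathlib

/-- The switching matrix `C_{i,j,k,l}` (square, integer entries). -/
def switchMatrix {n : ℕ} (i j k l : Fin n) : Matrix (Fin n) (Fin n) ℤ :=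
  Matrix.single i k 1 + Matrix.single j l 1
    - Matrix.single i l 1 - Matrix.single j k 1

/-- The symmetric switching matrix `C_{i,j,k,l} + C_{i,j,k,l}ᵀ`. -/
def symSwitchMatrix {n : ℕ} (i j k l : Fin n) : Matrix (Fin n) (Fin n) ℤ :=
  switchMatrix i j k l + (switchMatrix i j k l).transpose

/-- Degree of vertex `u` in the graph with adjacency matrix `A`. -/
def deg {n : ℕ} (A : Matrix (Fin n) (Fin n) ℤ) (u : Fin n) : ℤ := ∑ v, A u v

/-- Second Zagreb index `M₂ = Σ_{edges uv} d_u d_v` (each edge counted once). -/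
def zagreb2 {n : ℕ} (A : Matrix (Fin n) (Fin n) ℤ) : ℤ :=
  ∑ u : Fin n, ∑ v : Fin n, if u < v then A u v * deg A u * deg A v else 0
/-!
A symmetric switch adds `+1` at `{i,k}, {j,l}` and `-1` at `{i,l}, {j,k}`; every row of the
added matrix sums to zero, so the degrees do not change. With the degrees fixed, `M₂` is linear
in the adjacency matrix, and the four edges contribute
`d_i d_k + d_j d_l - d_i d_l - d_j d_k = (d_i - d_j)(d_k - d_l)`, which is nonnegative when the
degree sequence is non-increasing.
-/

section StrictUpperQuadForm

variable {ι R : Type*} [Fintype ι] [LinearOrder ι] [CommRing R]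

def strictUpperQuadForm (M : Matrix ι ι R) (d : ι → R) : R :=
  ∑ u, ∑ v, if u < v then M u v * d u * d v else 0

lemma strictUpperQuadForm_add (M N : Matrix ι ι R) (d : ι → R) :
    strictUpperQuadForm (M + N) d = strictUpperQuadForm M d + strictUpperQuadForm N d := by
  simp only [strictUpperQuadForm, ← Finset.sum_add_distrib, Matrix.add_apply]
  refine Finset.sum_congr rfl fun u _ => Finset.sum_congr rfl fun v _ => ?_
  split_ifs <;> ring

lemma strictUpperQuadForm_sub (M N : Matrix ι ι R) (d : ι → R) :
    strictUpperQuadForm (M - N) d = strictUpperQuadForm M d - strictUpperQuadForm N d := by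
  rw [eq_sub_iff_add_eq, ← strictUpperQuadForm_add, sub_add_cancel]

lemma strictUpperQuadForm_single (a b : ι) (d : ι → R) :
    strictUpperQuadForm (Matrix.single a b 1) d = if a < b then d a * d b else 0 := by
  have hterm : ∀ u v, (if u < v then Matrix.single a b (1 : R) u v * d u * d v else 0) =
      if b = v then if a = u then if u < v then d u * d v else 0 else 0 else 0 := by
    intro u v
    simp only [Matrix.single_apply]
    split_ifs <;> simp_all
  simp only [strictUpperQuadForm, hterm, Finset.sum_ite_eq, Finset.mem_univ, if_true]

lemma strictUpperQuadForm_single_add_single_swap {a b : ι} (hab : a ≠ b) (d : ι → R) :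
    strictUpperQuadForm (Matrix.single a b 1 + Matrix.single b a 1) d = d a * d b := by
  rw [strictUpperQuadForm_add, strictUpperQuadForm_single, strictUpperQuadForm_single]
  rcases hab.lt_or_gt with h | h
  · rw [if_pos h, if_neg h.asymm, add_zero]
  · rw [if_neg h.asymm, if_pos h, zero_add, mul_comm]

end StrictUpperQuadForm

lemma zagreb2_eq {n : ℕ} (A : Matrix (Fin n) (Fin n) ℤ) :
    zagreb2 A = strictUpperQuadForm A (deg A) := rfl

section Degree

variable {n : ℕ}

lemma deg_add (A B : Matrix (Fin n) (Fin n) ℤ) : deg (A + B) = deg A + deg B := by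
  funext u
  simp only [deg, Matrix.add_apply, Finset.sum_add_distrib, Pi.add_apply]

lemma deg_sub (A B : Matrix (Fin n) (Fin n) ℤ) : deg (A - B) = deg A - deg B := by
  rw [eq_sub_iff_add_eq, ← deg_add, sub_add_cancel]

lemma deg_single (a b : Fin n) : deg (Matrix.single a b 1) = Pi.single a 1 := by
  funext u
  simp only [deg, Matrix.single_apply, ite_and, Finset.sum_ite_irrel, Finset.sum_ite_eq,
    Finset.mem_univ, if_true, Finset.sum_const_zero, Pi.single_apply, eq_comm]

lemma deg_symSwitchMatrix (i j k l : Fin n) : deg (symSwitchMatrix i j k l) = 0 := by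
  simp only [symSwitchMatrix, switchMatrix, Matrix.transpose_add, Matrix.transpose_sub,
    Matrix.transpose_single, deg_add, deg_sub, deg_single]
  abel

lemma deg_add_symSwitchMatrix (A : Matrix (Fin n) (Fin n) ℤ) (i j k l : Fin n) :
    deg (A + symSwitchMatrix i j k l) = deg A := by
  rw [deg_add, deg_symSwitchMatrix, add_zero]

end Degree

section Switch

variable {n : ℕ} {i j k l : Fin n}

lemma symSwitchMatrix_eq :
    symSwitchMatrix i j k l =
      (Matrix.single i k 1 + Matrix.single k i 1) + (Matrix.single j l 1 + Matrix.single l j 1)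
        - (Matrix.single i l 1 + Matrix.single l i 1)
        - (Matrix.single j k 1 + Matrix.single k j 1) := by
  simp only [symSwitchMatrix, switchMatrix, Matrix.transpose_add, Matrix.transpose_sub,
    Matrix.transpose_single]
  abel

lemma strictUpperQuadForm_symSwitchMatrix (hik : i ≠ k) (hil : i ≠ l) (hjk : j ≠ k)
    (hjl : j ≠ l) (d : Fin n → ℤ) :
    strictUpperQuadForm (symSwitchMatrix i j k l) d = (d i - d j) * (d k - d l) := by
  rw [symSwitchMatrix_eq, strictUpperQuadForm_sub, strictUpperQuadForm_sub,
    strictUpperQuadForm_add, strictUpperQuadForm_single_add_single_swap hik,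
    strictUpperQuadForm_single_add_single_swap hjl,
    strictUpperQuadForm_single_add_single_swap hil,
    strictUpperQuadForm_single_add_single_swap hjk]
  ring

lemma zagreb2_add_symSwitchMatrix_sub (A : Matrix (Fin n) (Fin n) ℤ) (hik : i ≠ k)
    (hil : i ≠ l) (hjk : j ≠ k) (hjl : j ≠ l) :
    zagreb2 (A + symSwitchMatrix i j k l) - zagreb2 A =
      (deg A i - deg A j) * (deg A k - deg A l) := by
  rw [zagreb2_eq, zagreb2_eq, deg_add_symSwitchMatrix, strictUpperQuadForm_add,
    add_sub_cancel_left, strictUpperQuadForm_symSwitchMatrix hik hil hjk hjl]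

end Switch

theorem stmt9_general {n : ℕ} (A A' : Matrix (Fin n) (Fin n) ℤ)
    (hmono : Antitone (deg A))
    (i j k l : Fin n) (hij : i < j) (hkl : k < l)
    (hik : i ≠ k) (hil : i ≠ l) (hjk : j ≠ k) (hjl : j ≠ l)
    (hA' : A' = A + symSwitchMatrix i j k l) :
    zagreb2 A' - zagreb2 A = (deg A i - deg A j) * (deg A k - deg A l) ∧
      0 ≤ (deg A i - deg A j) * (deg A k - deg A l) := by
  subst hA'
  exact ⟨zagreb2_add_symSwitchMatrix_sub A hik hil hjk hjl,
    mul_nonneg (sub_nonneg.2 (hmono hij.le)) (sub_nonneg.2 (hmono hkl.le))⟩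

/-- a symmetric positive switch changes `M₂` by
`(d_i - d_j)(d_k - d_l) ≥ 0` when degrees are non-increasing. -/
theorem stmt9 {n : ℕ} (A A' : Matrix (Fin n) (Fin n) ℤ)
    (hbin : ∀ u v, A u v = 0 ∨ A u v = 1) (hsym : A.IsSymm) (hdiag : ∀ u, A u u = 0)
    (hmono : Antitone (deg A))
    (i j k l : Fin n) (hij : i < j) (hkl : k < l)
    (hik : i ≠ k) (hil : i ≠ l) (hjk : j ≠ k) (hjl : j ≠ l)
    (h1 : A i l = 1) (h2 : A j k = 1) (h3 : A i k = 0) (h4 : A j l = 0)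
    (hA' : A' = A + symSwitchMatrix i j k l) :
    zagreb2 A' - zagreb2 A = (deg A i - deg A j) * (deg A k - deg A l) ∧
      0 ≤ (deg A i - deg A j) * (deg A k - deg A l) :=
  stmt9_general A A' hmono i j k l hij hkl hik hil hjk hjl hA'
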